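/- arXiv:2401.17817 — 2 statements merged into one kernel-verified Lean document; each statement's English description precedes it below -/
import Mathlib

section
/- Let k ≥ 3 be an integer, let n₁ ≥ n₂ ≥ ⋯ ≥ n_k be positive integers, and let n′₁ ≥ n′₂ ≥ ⋯ ≥ n′_k be positive integers with n′_i ≥ n_i for each 1 ≤ i ≤ k. If there exists an orientation D of the complete k-partite graph K_{n₁,…,n_k} whose (1,2)-step competition graph is complete, then there exists an orientation D′ of K_{n′₁,…,n′_k} whose (1,2)-step competition graph is complete. -/
/-- Adjacency in the (1,2)-step competition graph `C_{1,2}(D)` of the (simple) digraph `D`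
with arc relation `A`: there is a vertex `w` distinct from `u` and `v` such that either
(`d_{D-v}(u,w) ≤ 1` and `d_{D-u}(v,w) ≤ 2`) or (`d_{D-u}(v,w) ≤ 1` and `d_{D-v}(u,w) ≤ 2`). -/
def CompAdj {V : Type*} (A : V → V → Prop) (u v : V) : Prop :=
  u ≠ v ∧ ∃ w, w ≠ u ∧ w ≠ v ∧
    ((A u w ∧ (A v w ∨ ∃ z, z ≠ u ∧ A v z ∧ A z w)) ∨
     (A v w ∧ (A u w ∨ ∃ z, z ≠ v ∧ A u z ∧ A z w)))

/-- The (1,2)-step competition graph `C_{1,2}(D)` of the digraph with arc relation `A`. -/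
def compGraph {V : Type*} (A : V → V → Prop) : SimpleGraph V where
  Adj := CompAdj A
  symm := by
    constructor
    rintro u v ⟨hne, w, h1, h2, h3⟩
    exact ⟨hne.symm, w, h2, h1, h3.symm⟩
  loopless := by constructor; rintro u ⟨hne, -⟩; exact hne rfl

/-- Vertices `u` and `v` `(1,2)`-compete in the digraph with arc relation `A`: there is a
vertex `w` distinct from `u` and `v` such that either (`u → w` and there is a directed path
of length 2 from `v` to `w` not traversing `u`) or vice versa. -/
def OneTwoCompete {V : Type*} (A : V → V → Prop) (u v : V) : Prop :=
  ∃ w, w ≠ u ∧ w ≠ v ∧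
    ((A u w ∧ ∃ z, z ≠ u ∧ A v z ∧ A z w) ∨
     (A v w ∧ ∃ z, z ≠ v ∧ A u z ∧ A z w))

/-- `A` is an orientation of the complete multipartite graph whose parts are the fibres of
`p : V → ι`: no arcs within a part, and exactly one arc between any two vertices in
different parts. -/
def IsCompleteMultipartiteOrientation {V ι : Type*} (A : V → V → Prop) (p : V → ι) : Prop :=
  (∀ u v : V, p u = p v → ¬ A u v) ∧
  ∀ u v : V, p u ≠ p v → (A u v ∨ A v u) ∧ ¬ (A u v ∧ A v u)

/-- A multipartite tournament: an orientation of a complete `k`-partite graph with `k ≥ 3`,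
whose partite sets are the (nonempty) fibres of `p : V → ι`. -/
def IsMultipartiteTournament {V ι : Type*} [Fintype ι] (A : V → V → Prop) (p : V → ι) : Prop :=
  Function.Surjective p ∧ 3 ≤ Fintype.card ι ∧ IsCompleteMultipartiteOrientation A p

/-- A multipartite tournament is tight if every partite set is a clique in `C_{1,2}(D)`. -/
def IsTight {V ι : Type*} (A : V → V → Prop) (p : V → ι) : Prop :=
  ∀ u v : V, u ≠ v → p u = p v → CompAdj A u v

/-- A tournament: an orientation of a complete graph. -/
def IsTournament {V : Type*} (A : V → V → Prop) : Prop :=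
  (∀ u, ¬ A u u) ∧ ∀ u v : V, u ≠ v → (A u v ∨ A v u) ∧ ¬ (A u v ∧ A v u)


/-!
Map each part of the larger graph onto the corresponding (nonempty, smaller) part of `D`,
fixing the old vertices, and orient the new graph by pulling back the arcs of `D`. Two
vertices with distinct images inherit a competition witness from `D` through the inclusion.
Two vertices with the same image are clones, and they compete through a common out-neighbour,
which exists because a vertex of `D` with no out-neighbour would compete with nobody.
-/

open Function

section Pullback

variable {V W ι : Type*} {A : V → V → Prop}

theorem IsCompleteMultipartiteOrientation.irrefl {p : V → ι}
    (hA : IsCompleteMultipartiteOrientation A p) (v : V) : ¬ A v v :=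
  hA.1 v v rfl

theorem IsCompleteMultipartiteOrientation.onFun {p : V → ι}
    (hA : IsCompleteMultipartiteOrientation A p) (f : W → V) :
    IsCompleteMultipartiteOrientation (A on f) (p ∘ f) :=
  ⟨fun u v h => hA.1 (f u) (f v) h, fun u v h => hA.2 (f u) (f v) h⟩

theorem CompAdj.exists_arc_left {u v : V} (h : CompAdj A u v) : ∃ w, A u w := by
  obtain ⟨-, w, -, -, ⟨huw, -⟩ | ⟨-, huw | ⟨z, -, huz, -⟩⟩⟩ := h
  exacts [⟨w, huw⟩, ⟨w, huw⟩, ⟨z, huz⟩]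

theorem exists_arc_of_compGraph_eq_top [Nontrivial V] (hC : compGraph A = ⊤) (u : V) :
    ∃ w, A u w := by
  obtain ⟨v, hv⟩ := exists_ne u
  have : (compGraph A).Adj u v := hC ▸ hv.symm
  exact CompAdj.exists_arc_left this

variable {f : W → V} {s : V → W}

theorem compAdj_onFun_of_compAdj (hfs : LeftInverse f s) {u v : W} (huv : u ≠ v)
    (h : CompAdj A (f u) (f v)) : CompAdj (A on f) u v := by
  have lift : ∀ {x : W} {w : V}, w ≠ f x → s w ≠ x := fun hw hx => hw (hx ▸ (hfs _).symm)
  have arc : ∀ {a b : V}, A a b → (A on f) (s a) (s b) := fun hab => by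
    simpa only [onFun, hfs _] using hab
  have arc_left : ∀ {x : W} {b : V}, A (f x) b → (A on f) x (s b) := fun hxb => by
    simpa only [onFun, hfs _] using hxb
  obtain ⟨-, w, hwu, hwv, hc⟩ := h
  refine ⟨huv, s w, lift hwu, lift hwv, ?_⟩
  rcases hc with ⟨huw, hvw | ⟨z, hzv, hvz, hzw⟩⟩ | ⟨hvw, huw | ⟨z, hzu, huz, hzw⟩⟩
  · exact .inl ⟨arc_left huw, .inl (arc_left hvw)⟩
  · exact .inl ⟨arc_left huw, .inr ⟨s z, lift hzv, arc_left hvz, arc hzw⟩⟩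
  · exact .inr ⟨arc_left hvw, .inl (arc_left huw)⟩
  · exact .inr ⟨arc_left hvw, .inr ⟨s z, lift hzu, arc_left huz, arc hzw⟩⟩

theorem compAdj_onFun_of_eq (hirr : ∀ v, ¬ A v v) (hfs : LeftInverse f s) {u v : W}
    (huv : u ≠ v) (hf : f u = f v) {w : V} (hw : A (f u) w) : CompAdj (A on f) u v := by
  have hsw : f (s w) = w := hfs w
  have hwu : w ≠ f u := fun h => hirr _ (h ▸ hw)
  refine ⟨huv, s w, fun h => hwu ?_, fun h => hwu ?_, .inl ⟨?_, .inl ?_⟩⟩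
  · rw [← hsw, h]
  · rw [← hsw, h, hf]
  · simpa only [onFun, hsw] using hw
  · simpa only [onFun, hsw, ← hf] using hw

theorem compGraph_onFun_eq_top (hirr : ∀ v, ¬ A v v) (hout : ∀ v, ∃ w, A v w)
    (hC : compGraph A = ⊤) (hfs : LeftInverse f s) : compGraph (A on f) = ⊤ := by
  refine top_le_iff.mp fun u v huv => ?_
  by_cases hf : f u = f v
  · obtain ⟨w, hw⟩ := hout (f u)
    exact compAdj_onFun_of_eq hirr hfs huv hf hw
  · have : (compGraph A).Adj (f u) (f v) := hC ▸ hf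
    exact compAdj_onFun_of_compAdj hfs huv this

end Pullback

theorem stmt10_general (k : ℕ) (hk : 3 ≤ k) (n n' : Fin k → ℕ)
    (hpos : ∀ i, 0 < n i) (hle : ∀ i, n i ≤ n' i)
    (h : ∃ A : (Σ i : Fin k, Fin (n i)) → (Σ i : Fin k, Fin (n i)) → Prop,
      IsCompleteMultipartiteOrientation A Sigma.fst ∧ compGraph A = ⊤) :
    ∃ A' : (Σ i : Fin k, Fin (n' i)) → (Σ i : Fin k, Fin (n' i)) → Prop,
      IsCompleteMultipartiteOrientation A' Sigma.fst ∧ compGraph A' = ⊤ := by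
  obtain ⟨A, hA, hC⟩ := h
  have : ∀ i, NeZero (n i) := fun i => ⟨(hpos i).ne'⟩
  have : Nontrivial (Σ i : Fin k, Fin (n i)) :=
    ⟨⟨⟨⟨0, by omega⟩, 0⟩, ⟨⟨1, by omega⟩, 0⟩, by simp [Sigma.ext_iff]⟩⟩
  let f : (Σ i : Fin k, Fin (n' i)) → Σ i : Fin k, Fin (n i) :=
    fun x => ⟨x.1, Fin.ofNat (n x.1) x.2⟩
  let s : (Σ i : Fin k, Fin (n i)) → Σ i : Fin k, Fin (n' i) :=
    fun x => ⟨x.1, Fin.castLE (hle x.1) x.2⟩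
  have hfs : LeftInverse f s := by
    rintro ⟨i, j⟩
    simp [f, s]
  exact ⟨A on f, hA.onFun f,
    compGraph_onFun_eq_top hA.irrefl (exists_arc_of_compGraph_eq_top hC) hC hfs⟩

/-- If `K_{n₁,…,n_k}` (with `k ≥ 3` and `n₁ ≥ ⋯ ≥ n_k ≥ 1`) admits an
orientation whose `(1,2)`-step competition graph is complete, then so does
`K_{n′₁,…,n′_k}` whenever `n′₁ ≥ ⋯ ≥ n′_k ≥ 1` and `n′ᵢ ≥ nᵢ` for each `i`. -/
theorem stmt10 (k : ℕ) (hk : 3 ≤ k) (n n' : Fin k → ℕ)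
    (hpos : ∀ i, 0 < n i) (hpos' : ∀ i, 0 < n' i)
    (hanti : Antitone n) (hanti' : Antitone n') (hle : ∀ i, n i ≤ n' i)
    (h : ∃ A : (Σ i : Fin k, Fin (n i)) → (Σ i : Fin k, Fin (n i)) → Prop,
      IsCompleteMultipartiteOrientation A Sigma.fst ∧ compGraph A = ⊤) :
    ∃ A' : (Σ i : Fin k, Fin (n' i)) → (Σ i : Fin k, Fin (n' i)) → Prop,
      IsCompleteMultipartiteOrientation A' Sigma.fst ∧ compGraph A' = ⊤ :=
  stmt10_general k hk n n' hpos hle h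
end

section
/- Let k ≥ 3 be an integer and let n₁ ≥ n₂ ≥ ⋯ ≥ n_k be positive integers. There exists an orientation D of the complete k-partite graph K_{n₁,n₂,…,n_k} whose (1,2)-step competition graph is complete if and only if one of the following holds: (a) k = 3 and either (n₂ ≥ 3 and n₃ = 1) or n₃ ≥ 2; (b) k = 4 and either (n₁ ≥ 3 and n₂ = 1) or n₂ ≥ 2; (c) k ≥ 5. -/
section General

variable {V W ι : Type*} {A : V → V → Prop} {B : W → W → Prop}

theorem compGraph_eq_top_iff : compGraph A = ⊤ ↔ ∀ u v, u ≠ v → CompAdj A u v := by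
  refine ⟨fun h u v huv => ?_, fun h => ?_⟩
  · have : (⊤ : SimpleGraph V).Adj u v := huv
    rwa [← h] at this
  · ext u v
    exact ⟨fun huv => huv.1, h u v⟩

theorem CompAdj.symm {u v : V} (h : CompAdj A u v) : CompAdj A v u :=
  (compGraph A).adj_symm h

theorem CompAdj.exists_out {u v : V} (h : CompAdj A u v) : ∃ c, c ≠ v ∧ A u c := by
  obtain ⟨-, w, -, hwv, ⟨huw, -⟩ | ⟨-, huw | ⟨z, hzv, huz, -⟩⟩⟩ := h
  exacts [⟨w, hwv, huw⟩, ⟨w, hwv, huw⟩, ⟨z, hzv, huz⟩]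

theorem compAdj_of_common_out {u v w : V} (huv : u ≠ v) (hwu : w ≠ u) (hwv : w ≠ v)
    (hu : A u w) (hv : A v w) : CompAdj A u v :=
  ⟨huv, w, hwu, hwv, Or.inl ⟨hu, Or.inl hv⟩⟩

theorem CompAdj.map {f : W → V} (hf : Function.Injective f)
    (hBA : ∀ x y, B x y → A (f x) (f y)) {u v : W} (h : CompAdj B u v) :
    CompAdj A (f u) (f v) := by
  obtain ⟨huv, w, hwu, hwv, hw⟩ := h
  refine ⟨hf.ne huv, f w, hf.ne hwu, hf.ne hwv, ?_⟩
  rcases hw with ⟨h1, h2 | ⟨z, hz, h3, h4⟩⟩ | ⟨h1, h2 | ⟨z, hz, h3, h4⟩⟩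
  · exact Or.inl ⟨hBA _ _ h1, Or.inl (hBA _ _ h2)⟩
  · exact Or.inl ⟨hBA _ _ h1, Or.inr ⟨f z, hf.ne hz, hBA _ _ h3, hBA _ _ h4⟩⟩
  · exact Or.inr ⟨hBA _ _ h1, Or.inl (hBA _ _ h2)⟩
  · exact Or.inr ⟨hBA _ _ h1, Or.inr ⟨f z, hf.ne hz, hBA _ _ h3, hBA _ _ h4⟩⟩

theorem CompAdj.comap {f : V → W} (hf : Function.Surjective f) {u v : V}
    (h : CompAdj B (f u) (f v)) : CompAdj (fun x y => B (f x) (f y)) u v := by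
  obtain ⟨huv, w, hwu, hwv, hw⟩ := h
  obtain ⟨x, rfl⟩ := hf w
  refine ⟨fun h => huv (congrArg f h), x, fun h => hwu (congrArg f h),
    fun h => hwv (congrArg f h), ?_⟩
  rcases hw with ⟨h1, h2 | ⟨z, hz, h3, h4⟩⟩ | ⟨h1, h2 | ⟨z, hz, h3, h4⟩⟩
  · exact Or.inl ⟨h1, Or.inl h2⟩
  · obtain ⟨y, rfl⟩ := hf z
    exact Or.inl ⟨h1, Or.inr ⟨y, fun h => hz (congrArg f h), h3, h4⟩⟩
  · exact Or.inr ⟨h1, Or.inl h2⟩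
  · obtain ⟨y, rfl⟩ := hf z
    exact Or.inr ⟨h1, Or.inr ⟨y, fun h => hz (congrArg f h), h3, h4⟩⟩

theorem compGraph_comap_eq_top [Nontrivial W] (hirr : ∀ w, ¬ B w w) (hB : compGraph B = ⊤)
    {f : V → W} (hf : Function.Surjective f) :
    compGraph (fun x y => B (f x) (f y)) = ⊤ := by
  rw [compGraph_eq_top_iff] at hB ⊢
  intro u v huv
  by_cases hfuv : f u = f v
  · obtain ⟨w, hwu⟩ := exists_ne (f u)
    obtain ⟨c, -, hc⟩ := (hB _ _ hwu.symm).exists_out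
    obtain ⟨x, rfl⟩ := hf c
    have hxu : x ≠ u := fun h => hirr _ (h ▸ hc)
    have hxv : x ≠ v := fun h => hirr _ (h ▸ hfuv ▸ hc)
    exact compAdj_of_common_out huv hxu hxv hc (hfuv ▸ hc)
  · exact (hB _ _ hfuv).comap hf

namespace IsCompleteMultipartiteOrientation

variable {p : V → ι}

theorem part_ne (hA : IsCompleteMultipartiteOrientation A p) {u v : V} (h : A u v) :
    p u ≠ p v :=
  fun he => hA.1 u v he h

theorem irrefl_s11 (hA : IsCompleteMultipartiteOrientation A p) (u : V) : ¬ A u u :=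
  fun h => hA.part_ne h rfl

theorem not_adj_symm (hA : IsCompleteMultipartiteOrientation A p) {u v : V} (h : A u v) :
    ¬ A v u :=
  fun h' => (hA.2 u v (hA.part_ne h)).2 ⟨h, h'⟩

theorem comap (hA : IsCompleteMultipartiteOrientation A p) {q : W → ι} {f : W → V}
    (hf : ∀ x y, q x = q y ↔ p (f x) = p (f y)) :
    IsCompleteMultipartiteOrientation (fun x y => A (f x) (f y)) q :=
  ⟨fun x y h => hA.1 _ _ ((hf x y).1 h), fun x y h => hA.2 _ _ (mt (hf x y).2 h)⟩

/-- If, outside the part `X = p⁻¹ i`, there are only the vertices `u ≠ v` and `s`, and neither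
`u` nor `v` beats `s`, then `u` and `v` can only compete through a common prey `w ∈ X`; but
then `w` has no out-neighbour other than `s`. -/
theorem compGraph_ne_top_of_cover (hA : IsCompleteMultipartiteOrientation A p) {i : ι}
    {u v s : V} (huv : u ≠ v) (hs : p s ≠ i) (hus : ¬ A u s) (hvs : ¬ A v s)
    (hcover : ∀ x, p x = i ∨ x = u ∨ x = v ∨ x = s) : compGraph A ≠ ⊤ := by
  intro hC
  rw [compGraph_eq_top_iff] at hC
  have into_X : ∀ x y, A x y → p y = i → x = u ∨ x = v ∨ x = s := fun x y hxy hy =>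
    (hcover x).resolve_left fun hx => hA.part_ne hxy (hx.trans hy.symm)
  obtain ⟨-, w, hwu, hwv, hw⟩ := hC u v huv
  have hwX : p w = i := by
    rcases hcover w with hw' | rfl | rfl | rfl
    · exact hw'
    · exact absurd rfl hwu
    · exact absurd rfl hwv
    · rcases hw with ⟨h, -⟩ | ⟨h, -⟩
      exacts [absurd h hus, absurd h hvs]
  have hprey : A u w ∧ A v w := by
    rcases hw with ⟨huw, hvw | ⟨z, hzu, hvz, hzw⟩⟩ | ⟨hvw, huw | ⟨z, hzv, huz, hzw⟩⟩
    · exact ⟨huw, hvw⟩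
    · rcases into_X z w hzw hwX with rfl | rfl | rfl
      exacts [absurd rfl hzu, absurd hvz (hA.irrefl_s11 _), absurd hvz hvs]
    · exact ⟨huw, hvw⟩
    · rcases into_X z w hzw hwX with rfl | rfl | rfl
      exacts [absurd huz (hA.irrefl_s11 _), absurd rfl hzv, absurd huz hus]
  obtain ⟨c, hcs, hwc⟩ := (hC w s fun h => hs (h ▸ hwX)).exists_out
  rcases hcover c with hc | rfl | rfl | rfl
  · exact hA.part_ne hwc (hwX.trans hc.symm)
  · exact hA.not_adj_symm hwc hprey.1
  · exact hA.not_adj_symm hwc hprey.2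
  · exact hcs rfl

/-- Every vertex has out-degree at least `2`, and an arc and its reverse are two ordered pairs
of vertices in different parts. -/
theorem four_mul_card_le [Fintype V] [Nontrivial V] [DecidableEq ι]
    (hA : IsCompleteMultipartiteOrientation A p) (hC : compGraph A = ⊤) :
    4 * Fintype.card V ≤ Fintype.card {x : V × V // p x.1 ≠ p x.2} := by
  classical
  rw [compGraph_eq_top_iff] at hC
  have hdeg (u : V) : 2 ≤ Fintype.card {v // A u v} := by
    obtain ⟨v, hvu⟩ := exists_ne u
    obtain ⟨c, -, hc⟩ := (hC u v hvu.symm).exists_out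
    obtain ⟨c', hc'c, hc'⟩ := (hC u c fun h => hA.irrefl_s11 u (by rwa [← h] at hc)).exists_out
    exact Fintype.one_lt_card_iff.2 ⟨⟨c', hc'⟩, ⟨c, hc⟩, fun h => hc'c (congrArg Subtype.val h)⟩
  have harcs : 2 * Fintype.card V ≤ Fintype.card (Σ u, {v // A u v}) :=
    calc 2 * Fintype.card V = ∑ _u : V, 2 := by simp [mul_comm]
      _ ≤ _ := by rw [Fintype.card_sigma]; exact Finset.sum_le_sum fun u _ => hdeg u
  let f : (Σ u, {v // A u v}) ⊕ (Σ u, {v // A u v}) → {x : V × V // p x.1 ≠ p x.2}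
    | .inl ⟨u, v, h⟩ => ⟨(u, v), hA.part_ne h⟩
    | .inr ⟨u, v, h⟩ => ⟨(v, u), (hA.part_ne h).symm⟩
  have hf : Function.Injective f := by
    rintro (⟨u, v, h⟩ | ⟨u, v, h⟩) (⟨u', v', h'⟩ | ⟨u', v', h'⟩) e <;>
      simp only [f, Subtype.mk.injEq, Prod.mk.injEq] at e <;> obtain ⟨rfl, rfl⟩ := e
    · rfl
    · exact absurd h' (hA.not_adj_symm h)
    · exact absurd h' (hA.not_adj_symm h)
    · rfl
  have := Fintype.card_le_of_injective f hf
  rw [Fintype.card_sum] at this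
  omega

end IsCompleteMultipartiteOrientation

end General

instance {V : Type*} [Fintype V] [DecidableEq V] {A : V → V → Prop} [DecidableRel A]
    (u v : V) : Decidable (CompAdj A u v) := by
  unfold CompAdj; infer_instance

instance {V : Type*} [Fintype V] [DecidableEq V] {A : V → V → Prop} [DecidableRel A] :
    Decidable (compGraph A = ⊤) :=
  decidable_of_iff _ compGraph_eq_top_iff.symm

instance {V ι : Type*} [Fintype V] [DecidableEq ι] {A : V → V → Prop} [DecidableRel A]
    {p : V → ι} : Decidable (IsCompleteMultipartiteOrientation A p) := by
  unfold IsCompleteMultipartiteOrientation; infer_instance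

def HasCompleteOrientation {k : ℕ} (n : Fin k → ℕ) : Prop :=
  ∃ A : (Σ i : Fin k, Fin (n i)) → (Σ i : Fin k, Fin (n i)) → Prop,
    IsCompleteMultipartiteOrientation A Sigma.fst ∧ compGraph A = ⊤

theorem hasCompleteOrientation_of_tournament {k : ℕ} [Nontrivial (Fin k)]
    {T : Fin k → Fin k → Prop} (hT : IsCompleteMultipartiteOrientation T id)
    (hC : compGraph T = ⊤) {n : Fin k → ℕ} (hn : ∀ i, 0 < n i) : HasCompleteOrientation n :=
  ⟨fun u v => T u.1 v.1, hT.comap fun _ _ => Iff.rfl,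
    compGraph_comap_eq_top hT.irrefl_s11 hC fun i => ⟨⟨i, 0, hn i⟩, rfl⟩⟩

theorem HasCompleteOrientation.mono {k : ℕ} [Nontrivial (Fin k)] {m n : Fin k → ℕ}
    (h : HasCompleteOrientation m) (hm : ∀ i, 0 < m i) (hmn : m ≤ n) :
    HasCompleteOrientation n := by
  obtain ⟨B, hB, hC⟩ := h
  obtain ⟨i, j, hij⟩ := exists_pair_ne (Fin k)
  have : Nontrivial (Σ i : Fin k, Fin (m i)) :=
    ⟨⟨i, 0, hm i⟩, ⟨j, 0, hm j⟩, fun h => hij (congrArg Sigma.fst h)⟩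
  let f : (Σ i : Fin k, Fin (n i)) → Σ i : Fin k, Fin (m i) :=
    fun u => ⟨u.1, min u.2 (m u.1 - 1), by have := hm u.1; omega⟩
  have hf : Function.Surjective f := fun w =>
    ⟨⟨w.1, w.2, lt_of_lt_of_le w.2.2 (hmn w.1)⟩, by
      have := w.2.2
      exact Sigma.ext rfl (heq_of_eq (Fin.ext (by simp [f]; omega)))⟩
  exact ⟨fun u v => B (f u) (f v), hB.comap fun _ _ => Iff.rfl,
    compGraph_comap_eq_top hB.irrefl_s11 hC hf⟩

def orient222 (u v : Σ i : Fin 3, Fin (![2, 2, 2] i)) : Prop :=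
  u.1 = v.1 + 1

def orient331 (u v : Σ i : Fin 3, Fin (![3, 3, 1] i)) : Prop :=
  (u.1 = 0 ∧ v.1 = 1 ∧ u.2.val + v.2.val = 2) ∨ (u.1 = 1 ∧ v.1 = 0 ∧ u.2.val + v.2.val ≠ 2) ∨
    (u.1 = 0 ∧ v.1 = 2) ∨ (u.1 = 2 ∧ v.1 = 1)

def orient2211 (u v : Σ i : Fin 4, Fin (![2, 2, 1, 1] i)) : Prop :=
  (u.1, v.1) ∈ [(0, 2), (0, 3), (1, 0), (2, 1), (3, 1), (3, 2)]

def orient3111 (u v : Σ i : Fin 4, Fin (![3, 1, 1, 1] i)) : Prop :=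
  (u.1 = 0 ∧ v.1 ≠ 0 ∧ v.1.val ≠ u.2.val + 1) ∨ (u.1 ≠ 0 ∧ v.1 = 0 ∧ u.1.val = v.2.val + 1) ∨
    (u.1, v.1) ∈ [(1, 3), (3, 2), (2, 1)]

instance : DecidableRel orient222 := fun _ _ => by unfold orient222; infer_instance
instance : DecidableRel orient331 := fun _ _ => by unfold orient331; infer_instance
instance : DecidableRel orient2211 := fun _ _ => by unfold orient2211; infer_instance
instance : DecidableRel orient3111 := fun _ _ => by unfold orient3111; infer_instance

theorem hasCompleteOrientation_222 : HasCompleteOrientation ![2, 2, 2] :=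
  ⟨orient222, by decide, by decide⟩

theorem hasCompleteOrientation_331 : HasCompleteOrientation ![3, 3, 1] :=
  ⟨orient331, by decide, by decide⟩

theorem hasCompleteOrientation_2211 : HasCompleteOrientation ![2, 2, 1, 1] :=
  ⟨orient2211, by decide, by decide⟩

theorem hasCompleteOrientation_3111 : HasCompleteOrientation ![3, 1, 1, 1] :=
  ⟨orient3111, by decide, by decide⟩

def rotational5 (i j : Fin 5) : Prop :=
  j - i = 1 ∨ j - i = 2

instance : DecidableRel rotational5 := fun _ _ => by unfold rotational5; infer_instance

theorem isCompleteMultipartiteOrientation_rotational5 :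
    IsCompleteMultipartiteOrientation rotational5 id := by
  decide

theorem compGraph_rotational5_eq_top : compGraph rotational5 = ⊤ := by
  decide

def extendedRotational (k : ℕ) (i j : Fin k) : Prop :=
  if h : i.val < 5 ∧ j.val < 5 then rotational5 ⟨i, h.1⟩ ⟨j, h.2⟩ else j < i

theorem isCompleteMultipartiteOrientation_extendedRotational (k : ℕ) :
    IsCompleteMultipartiteOrientation (extendedRotational k) id := by
  have h5 := isCompleteMultipartiteOrientation_rotational5
  refine ⟨fun u v (huv : u = v) => ?_, fun u v (huv : u ≠ v) => ?_⟩
  · subst huv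
    unfold extendedRotational
    split_ifs
    exacts [h5.irrefl_s11 _, lt_irrefl u]
  · unfold extendedRotational
    by_cases h : u.val < 5 ∧ v.val < 5
    · rw [dif_pos h, dif_pos h.symm]
      exact h5.2 _ _ fun e => huv (Fin.ext (Fin.mk.inj e))
    · rw [dif_neg h, dif_neg (mt And.symm h)]
      exact ⟨huv.lt_or_gt.symm, fun h => lt_asymm h.1 h.2⟩

theorem compGraph_extendedRotational_eq_top {k : ℕ} (hk : 5 ≤ k) :
    compGraph (extendedRotational k) = ⊤ := by
  have hmap : ∀ x y, rotational5 x y →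
      extendedRotational k (Fin.castLE hk x) (Fin.castLE hk y) :=
    fun x y h => by unfold extendedRotational; rwa [dif_pos ⟨x.2, y.2⟩]
  have hout : ∀ v : Fin k, ∃ w : Fin k, w.val < 5 ∧ w ≠ v ∧ extendedRotational k v w := by
    intro v
    by_cases hv : v.val < 5
    · have hsucc : ∀ x : Fin 5, x + 1 ≠ x ∧ rotational5 x (x + 1) := by decide
      obtain ⟨hne, hx⟩ := hsucc ⟨v, hv⟩
      exact ⟨Fin.castLE hk _, (_ : Fin 5).2, fun h => hne (Fin.castLE_injective hk h),
        hmap _ _ hx⟩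
    · refine ⟨⟨0, by omega⟩, Nat.zero_lt_succ 4, fun h => hv (h ▸ Nat.zero_lt_succ 4), ?_⟩
      unfold extendedRotational
      rw [dif_neg (fun h => hv h.1)]
      show 0 < v.val
      omega
  have hbig : ∀ u v : Fin k, ¬ u.val < 5 → u ≠ v → CompAdj (extendedRotational k) u v := by
    intro u v hu huv
    obtain ⟨w, hw5, hwv, hvw⟩ := hout v
    refine compAdj_of_common_out huv (fun h => hu (h ▸ hw5)) hwv ?_ hvw
    unfold extendedRotational
    rw [dif_neg (fun h => hu h.1)]
    show w.val < u.val
    omega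
  rw [compGraph_eq_top_iff]
  intro u v huv
  by_cases hu : u.val < 5
  · by_cases hv : v.val < 5
    · exact (compGraph_eq_top_iff.1 compGraph_rotational5_eq_top ⟨u, hu⟩ ⟨v, hv⟩
        fun h => huv (Fin.ext (Fin.mk.inj h))).map (Fin.castLE_injective hk) hmap
    · exact (hbig v u hv huv.symm).symm
  · exact hbig u v hu huv

theorem hasCompleteOrientation_of_five_le {k : ℕ} (hk : 5 ≤ k) {n : Fin k → ℕ}
    (hn : ∀ i, 0 < n i) : HasCompleteOrientation n :=
  have : Nontrivial (Fin k) := Fin.nontrivial_iff_two_le.2 (by omega)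
  hasCompleteOrientation_of_tournament
    (isCompleteMultipartiteOrientation_extendedRotational k)
    (compGraph_extendedRotational_eq_top hk) hn

theorem not_hasCompleteOrientation_three {n : Fin 3 → ℕ} (hn : ∀ i, 0 < n i) (h1 : n 1 ≤ 2)
    (h2 : n 2 = 1) : ¬ HasCompleteOrientation n := by
  rintro ⟨A, hA, hC⟩
  -- `y'` is the second vertex of part `1`, or `y` again if `n 1 = 1`
  let y : Σ i : Fin 3, Fin (n i) := ⟨1, 0, hn 1⟩
  let y' : Σ i : Fin 3, Fin (n i) := ⟨1, n 1 - 1, by have := hn 1; omega⟩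
  let z : Σ i : Fin 3, Fin (n i) := ⟨2, 0, hn 2⟩
  have hcover : ∀ x : Σ i : Fin 3, Fin (n i), x.1 = 0 ∨ x = y ∨ x = y' ∨ x = z := by
    rintro ⟨⟨_ | _ | _ | j, hj⟩, a, ha⟩
    · exact Or.inl rfl
    · have ha' : a < n 1 := ha
      obtain rfl | rfl : a = 0 ∨ a = n 1 - 1 := by omega
      exacts [Or.inr (Or.inl rfl), Or.inr (Or.inr (Or.inl rfl))]
    · have ha' : a < n 2 := ha
      obtain rfl : a = 0 := by omega
      exact Or.inr (Or.inr (Or.inr rfl))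
    · omega
  have hyz : y.1 ≠ z.1 := (by decide : (1 : Fin 3) ≠ 2)
  have h10 : (1 : Fin 3) ≠ 0 := by decide
  have h20 : (2 : Fin 3) ≠ 0 := by decide
  rcases (hA.2 y' z hyz).1 with hy'z | hzy'
  · refine hA.compGraph_ne_top_of_cover (u := y) (v := z) (s := y') (ne_of_apply_ne Sigma.fst hyz)
      h10 (hA.1 _ _ rfl) (hA.not_adj_symm hy'z) (fun x => ?_) hC
    rcases hcover x with h | h | h | h <;> simp [h]
  rcases (hA.2 y z hyz).1 with hyz' | hzy
  · refine hA.compGraph_ne_top_of_cover (u := y') (v := z) (s := y) (ne_of_apply_ne Sigma.fst hyz)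
      h10 (hA.1 _ _ rfl) (hA.not_adj_symm hyz') (fun x => ?_) hC
    rcases hcover x with h | h | h | h <;> simp [h]
  by_cases hyy' : y = y'
  · refine hA.compGraph_ne_top_of_cover (u := y) (v := z) (s := z) (ne_of_apply_ne Sigma.fst hyz)
      h20 (hA.not_adj_symm hzy) (hA.irrefl_s11 z) (fun x => ?_) hC
    rcases hcover x with h | h | h | h <;> simp [h, ← hyy']
  · refine hA.compGraph_ne_top_of_cover (u := y) (v := y') (s := z) hyy'
      h20 (hA.not_adj_symm hzy) (hA.not_adj_symm hzy') (fun x => ?_) hC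
    rcases hcover x with h | h | h | h <;> simp [h]

theorem not_hasCompleteOrientation_four {m : ℕ} (hm : m = 1 ∨ m = 2) :
    ¬ HasCompleteOrientation ![m, 1, 1, 1] := by
  rintro ⟨A, hA, hC⟩
  have : Nontrivial (Σ i : Fin 4, Fin (![m, 1, 1, 1] i)) :=
    ⟨⟨1, 0, Nat.one_pos⟩, ⟨2, 0, Nat.one_pos⟩,
      fun h => (by decide : (1 : Fin 4) ≠ 2) (congrArg Sigma.fst h)⟩
  have := hA.four_mul_card_le hC
  rcases hm with rfl | rfl <;> revert this <;> decide

theorem hasCompleteOrientation_three_iff {n : Fin 3 → ℕ} (hn : ∀ i, 0 < n i)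
    (hanti : Antitone n) : HasCompleteOrientation n ↔ (3 ≤ n 1 ∧ n 2 = 1) ∨ 2 ≤ n 2 := by
  have h10 : n 1 ≤ n 0 := hanti (by decide)
  have h21 : n 2 ≤ n 1 := hanti (by decide)
  have := hn 2
  refine ⟨fun h => ?_, ?_⟩
  · by_contra hc
    exact not_hasCompleteOrientation_three hn (by omega) (by omega) h
  · rintro (⟨h1, -⟩ | h2)
    · refine hasCompleteOrientation_331.mono (by decide) fun i => ?_
      fin_cases i <;> simp <;> omega
    · refine hasCompleteOrientation_222.mono (by decide) fun i => ?_
      fin_cases i <;> simp <;> omega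

theorem hasCompleteOrientation_four_iff {n : Fin 4 → ℕ} (hn : ∀ i, 0 < n i)
    (hanti : Antitone n) : HasCompleteOrientation n ↔ (3 ≤ n 0 ∧ n 1 = 1) ∨ 2 ≤ n 1 := by
  have h10 : n 1 ≤ n 0 := hanti (by decide)
  have h21 : n 2 ≤ n 1 := hanti (by decide)
  have h32 : n 3 ≤ n 2 := hanti (by decide)
  have := hn 3
  refine ⟨fun h => ?_, ?_⟩
  · by_contra hc
    have hn' : n = ![n 0, 1, 1, 1] := by
      funext i
      fin_cases i <;> simp <;> omega
    exact not_hasCompleteOrientation_four (by omega) (hn' ▸ h)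
  · rintro (⟨h1, -⟩ | h2)
    · refine hasCompleteOrientation_3111.mono (by decide) fun i => ?_
      fin_cases i <;> simp <;> omega
    · refine hasCompleteOrientation_2211.mono (by decide) fun i => ?_
      fin_cases i <;> simp <;> omega

/-- Let `k ≥ 3` and `n₁ ≥ n₂ ≥ ⋯ ≥ n_k ≥ 1`. There exists an orientation of
`K_{n₁,…,n_k}` whose `(1,2)`-step competition graph is complete iff (a) `k = 3` and either
(`n₂ ≥ 3` and `n₃ = 1`) or `n₃ ≥ 2`; or (b) `k = 4` and either (`n₁ ≥ 3` and `n₂ = 1`) or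
`n₂ ≥ 2`; or (c) `k ≥ 5`. -/
theorem stmt11 (k : ℕ) (hk : 3 ≤ k) (n : Fin k → ℕ)
    (hpos : ∀ i, 0 < n i) (hanti : Antitone n) :
    (∃ A : (Σ i : Fin k, Fin (n i)) → (Σ i : Fin k, Fin (n i)) → Prop,
      IsCompleteMultipartiteOrientation A Sigma.fst ∧ compGraph A = ⊤) ↔
    ((k = 3 ∧ ((3 ≤ n ⟨1, by omega⟩ ∧ n ⟨2, by omega⟩ = 1) ∨ 2 ≤ n ⟨2, by omega⟩)) ∨
     (k = 4 ∧ ((3 ≤ n ⟨0, by omega⟩ ∧ n ⟨1, by omega⟩ = 1) ∨ 2 ≤ n ⟨1, by omega⟩)) ∨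
     5 ≤ k) := by
  change HasCompleteOrientation n ↔ _
  obtain rfl | rfl | hk5 : k = 3 ∨ k = 4 ∨ 5 ≤ k := by omega
  · simpa using hasCompleteOrientation_three_iff hpos hanti
  · simpa using hasCompleteOrientation_four_iff hpos hanti
  · simpa [hk5, show k ≠ 3 by omega, show k ≠ 4 by omega] using
      hasCompleteOrientation_of_five_le hk5 hpos
end
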